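/- arXiv:1507.04278 — 2 statements merged into one kernel-verified Lean document; each statement's English description precedes it below -/
import Mathlib

section
/- Let 𝓕 be a saturated fusion system on a finite p-group P and Q an 𝓕-nilcentralized subgroup that is fully centralized in 𝓕. Then the kernel of the natural restriction homomorphism from the stabilizer Aut_𝓕(Q·C_P(Q))_Q of Q in Aut_𝓕(Q·C_P(Q)) to Aut_𝓕(Q) is a p-group. -/
open Subgroup

namespace FS

variable {P : Type*} [Group P]

/-- The morphism of subgroups induced by conjugation. -/
def conjHom (Q R : Subgroup P) (x : P) (h : ∀ r ∈ R, x * r * x⁻¹ ∈ Q) :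
    ↥R →* ↥Q where
  toFun r := ⟨x * (r : P) * x⁻¹, h r r.2⟩
  map_one' := by ext; simp
  map_mul' a b := by ext; push_cast; group

/-- The image in the ambient group of a subgroup under a morphism between subgroups. -/
def imgIn {Q R : Subgroup P} (φ : ↥R →* ↥Q) (S : Subgroup P) : Subgroup P :=
  ((S.subgroupOf R).map φ).map Q.subtype

/-- A Frobenius P-category (fusion system) on a finite p-group P, recorded by its
sets of morphisms: for subgroups Q, R of P, the set Hom Q R consists of the
injective group homomorphisms R → Q belonging to the category.  It contains all
morphisms induced by conjugation in P, is closed under composition and under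
taking inverses of isomorphisms, and satisfies the divisibility axiom. -/
structure FrobeniusCategory (P : Type*) [Group P] where
  Hom : ∀ _Q _R : Subgroup P, Set (↥_R →* ↥_Q)
  inj : ∀ {Q R : Subgroup P} {φ : ↥R →* ↥Q}, φ ∈ Hom Q R → Function.Injective φ
  conj_mem : ∀ (Q R : Subgroup P) (x : P) (h : ∀ r ∈ R, x * r * x⁻¹ ∈ Q),
    conjHom Q R x h ∈ Hom Q R
  comp_mem : ∀ {Q R T : Subgroup P} {φ : ↥R →* ↥Q} {ψ : ↥T →* ↥R},
    φ ∈ Hom Q R → ψ ∈ Hom R T → φ.comp ψ ∈ Hom Q T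
  inv_mem : ∀ {Q : Subgroup P} (e : ↥Q ≃* ↥Q),
    e.toMonoidHom ∈ Hom Q Q → e.symm.toMonoidHom ∈ Hom Q Q
  divisibility : ∀ {Q R T : Subgroup P} {φ : ↥R →* ↥Q} (ψ : ↥T →* ↥R),
    φ ∈ Hom Q R → φ.comp ψ ∈ Hom Q T → ψ ∈ Hom R T

/-- Restriction of a morphism between subgroups to smaller subgroups. -/
def restrict {Q Q' R R' : Subgroup P} (hR : R ≤ Q) (hR' : R' ≤ Q')
    (θ : ↥Q →* ↥Q')
    (hθ : ∀ x : ↥R, ((θ (Subgroup.inclusion hR x) : ↥Q') : P) ∈ R') : ↥R →* ↥R' :=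
  (Subgroup.subgroupOfEquivOfLe hR').toMonoidHom.comp
    ((θ.comp (Subgroup.inclusion hR)).codRestrict (R'.subgroupOf Q')
      fun x => by simpa [Subgroup.mem_subgroupOf] using hθ x)

/-- Q is fully centralized in F: every F-morphism defined on Q·C_P(Q) maps the
centralizer of Q onto the centralizer of the image of Q. -/
def FullyCentralized (F : FrobeniusCategory P) (Q : Subgroup P) : Prop :=
  ∀ φ ∈ F.Hom (⊤ : Subgroup P) (Q ⊔ centralizer (Q : Set P)),
    imgIn φ (centralizer (Q : Set P)) = centralizer ((imgIn φ Q : Subgroup P) : Set P)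

/-- Q is fully normalized in F: its normalizer has maximal order in the
F-isomorphism class of Q. -/
def FullyNormalized (F : FrobeniusCategory P) (Q : Subgroup P) : Prop :=
  ∀ φ ∈ F.Hom (⊤ : Subgroup P) Q,
    Nat.card ↥(normalizer ((imgIn φ Q : Subgroup P) : Set P)) ≤ Nat.card ↥(normalizer (Q : Set P))

/-- Q and Q' are F-isomorphic: there is an F-morphism Q → Q' with image Q'. -/
def FIso (F : FrobeniusCategory P) (Q Q' : Subgroup P) : Prop :=
  ∃ φ ∈ F.Hom Q' Q, imgIn φ Q = Q'

/-- Saturation: the Sylow axiom (inner automorphisms form a Sylow p-subgroup of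
the F-automorphisms of P) and Puig's extension axiom. -/
structure IsSaturated (p : ℕ) (F : FrobeniusCategory P) : Prop where
  sylow : ∃ m : ℕ, Nat.card ↥(F.Hom (⊤ : Subgroup P) (⊤ : Subgroup P)) =
      Nat.card ↥{φ : ↥(⊤ : Subgroup P) →* ↥(⊤ : Subgroup P) |
        φ ∈ F.Hom ⊤ ⊤ ∧ ∃ x : P, ∀ r : ↥(⊤ : Subgroup P), ((φ r : ↥(⊤ : Subgroup P)) : P) = x * r * x⁻¹} * m ∧
      ¬ p ∣ m
  extension : ∀ Q : Subgroup P, FullyCentralized F Q →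
    ∀ φ ∈ F.Hom (⊤ : Subgroup P) Q, ∀ R : Subgroup P,
    imgIn φ Q ≤ R → R ≤ normalizer ((imgIn φ Q : Subgroup P) : Set P) →
    (∀ r ∈ R, ∃ x : P, ∃ hx : ∀ u ∈ Q, x * u * x⁻¹ ∈ Q,
      ∀ u : ↥Q, ((φ ⟨x * (u : P) * x⁻¹, hx u u.2⟩ : ↥(⊤ : Subgroup P)) : P) =
        r * ((φ u : ↥(⊤ : Subgroup P)) : P) * r⁻¹) →
    ∃ ζ ∈ F.Hom (⊤ : Subgroup P) R,
      ∀ (u : ↥Q) (hu : ((φ u : ↥(⊤ : Subgroup P)) : P) ∈ R),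
        ((ζ ⟨((φ u : ↥(⊤ : Subgroup P)) : P), hu⟩ : ↥(⊤ : Subgroup P)) : P) = u

/-- Q is F-selfcentralizing: the image of Q under any F-morphism to P contains
its own centralizer. -/
def SelfCentralizing (F : FrobeniusCategory P) (Q : Subgroup P) : Prop :=
  ∀ φ ∈ F.Hom (⊤ : Subgroup P) Q,
    centralizer ((imgIn φ Q : Subgroup P) : Set P) ≤ imgIn φ Q

/-- The centralizer subsystem of V in F is the trivial system on C_P(V): every
F-morphism between subgroups of C_P(V) which extends to a morphism fixing V
pointwise is induced by conjugation by an element of C_P(V). -/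
def CentralizerTrivial (F : FrobeniusCategory P) (V : Subgroup P) : Prop :=
  ∀ A B : Subgroup P, A ≤ centralizer (V : Set P) → B ≤ centralizer (V : Set P) →
    ∀ φ ∈ F.Hom A B,
      (∃ ψ ∈ F.Hom (A ⊔ V) (B ⊔ V),
        (∀ x : ↥B, ψ (Subgroup.inclusion le_sup_left x) =
          Subgroup.inclusion le_sup_left (φ x)) ∧
        (∀ x : ↥(B ⊔ V), (x : P) ∈ V → ((ψ x : ↥(A ⊔ V)) : P) = (x : P))) →
      ∃ c ∈ centralizer (V : Set P), ∀ b : ↥B, ((φ b : ↥A) : P) = c * (b : P) * c⁻¹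

/-- Q is F-nilcentralized: for every F-morphism to P with fully centralized
image, the centralizer subsystem of the image is trivial. -/
def Nilcentralized (F : FrobeniusCategory P) (Q : Subgroup P) : Prop :=
  ∀ φ ∈ F.Hom (⊤ : Subgroup P) Q,
    FullyCentralized F (imgIn φ Q) → CentralizerTrivial F (imgIn φ Q)

end FS

theorem Subgroup.apply_mem_centralizer_of_fixes {P : Type*} [Group P] {Q H : Subgroup P}
    (hQ : Q ≤ H) (c : ↥H →* ↥H) (hfix : ∀ x : ↥H, (x : P) ∈ Q → c x = x) (z : ↥H)
    (hz : (z : P) ∈ centralizer (Q : Set P)) : (c z : P) ∈ centralizer (Q : Set P) := by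
  rw [mem_centralizer_iff] at hz ⊢
  intro q hq
  have hcq : c ⟨q, hQ hq⟩ = ⟨q, hQ hq⟩ := hfix _ hq
  have hqz : (⟨q, hQ hq⟩ : ↥H) * z = z * ⟨q, hQ hq⟩ := Subtype.ext (hz q hq)
  simpa [hcq] using congrArg (fun y => ((c y : ↥H) : P)) hqz

theorem Subgroup.monoidHom_ext_sup {G M : Type*} [Group G] [Group M] {A B : Subgroup G}
    {f g : ↥(A ⊔ B) →* M} (hA : ∀ x : ↥(A ⊔ B), (x : G) ∈ A → f x = g x)
    (hB : ∀ x : ↥(A ⊔ B), (x : G) ∈ B → f x = g x) : f = g := by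
  have hle : A ⊔ B ≤ (f.eqLocus g).map (A ⊔ B).subtype :=
    sup_le (fun a ha => ⟨⟨a, mem_sup_left ha⟩, hA _ ha, rfl⟩)
      (fun b hb => ⟨⟨b, mem_sup_right hb⟩, hB _ hb, rfl⟩)
  ext x
  obtain ⟨y, hy, hyx⟩ := hle x.2
  rwa [show y = x from Subtype.ext hyx] at hy

theorem Subgroup.iterate_apply_coe_eq_conj_pow {G : Type*} [Group G] {H : Subgroup G}
    {c : ↥H →* ↥H} {g : G} (hc : ∀ x : ↥H, (c x : G) = g * x * g⁻¹) (n : ℕ) (x : ↥H) :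
    ((c^[n] x : ↥H) : G) = g ^ n * x * (g ^ n)⁻¹ := by
  induction n with
  | zero => simp
  | succ n ih =>
    rw [Function.iterate_succ_apply', hc, ih, pow_succ']
    group

namespace FS

variable {P : Type*} [Group P]

@[simp]
theorem conjHom_apply_coe {Q R : Subgroup P} {x : P} (h : ∀ r ∈ R, x * r * x⁻¹ ∈ Q) (r : ↥R) :
    ((conjHom Q R x h r : ↥Q) : P) = x * r * x⁻¹ :=
  rfl

@[simp]
theorem restrict_apply_coe {Q Q' R R' : Subgroup P} (hR : R ≤ Q) (hR' : R' ≤ Q')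
    (θ : ↥Q →* ↥Q') (hθ : ∀ x : ↥R, ((θ (Subgroup.inclusion hR x) : ↥Q') : P) ∈ R')
    (x : ↥R) : ((restrict hR hR' θ hθ x : ↥R') : P) = θ (Subgroup.inclusion hR x) :=
  rfl

theorem imgIn_conjHom_one_self {Q R : Subgroup P} (h : ∀ r ∈ R, 1 * r * 1⁻¹ ∈ Q) :
    imgIn (conjHom Q R 1 h) R = R := by
  ext x
  simp only [imgIn, Subgroup.mem_map]
  constructor
  · rintro ⟨_, ⟨a, _, rfl⟩, rfl⟩
    simp
  · intro hx
    exact ⟨_, ⟨⟨x, hx⟩, by simp, rfl⟩, by simp⟩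

namespace FrobeniusCategory

variable (F : FrobeniusCategory P)

/-- Restrictions of `F`-morphisms are `F`-morphisms, by the divisibility axiom applied to the
inclusion `R' → Q'`. -/
theorem restrict_mem {Q Q' R R' : Subgroup P} (hR : R ≤ Q) (hR' : R' ≤ Q')
    {θ : ↥Q →* ↥Q'} (hθF : θ ∈ F.Hom Q' Q)
    (hθ : ∀ x : ↥R, ((θ (Subgroup.inclusion hR x) : ↥Q') : P) ∈ R') :
    restrict hR hR' θ hθ ∈ F.Hom R' R := by
  have incl {A B : Subgroup P} (h : A ≤ B) : ∀ a ∈ A, 1 * a * 1⁻¹ ∈ B :=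
    fun a ha => by simpa using h ha
  have hcomp : (conjHom Q' R' 1 (incl hR')).comp (restrict hR hR' θ hθ) =
      θ.comp (conjHom Q R 1 (incl hR)) := by
    ext x
    simpa using congrArg (fun y => ((θ y : ↥Q') : P)) (Subtype.ext (by simp))
  refine F.divisibility _ (F.conj_mem _ _ 1 (incl hR')) ?_
  rw [hcomp]
  exact F.comp_mem hθF (F.conj_mem _ _ 1 (incl hR))

end FrobeniusCategory

theorem Nilcentralized.centralizerTrivial {F : FrobeniusCategory P} {Q : Subgroup P}
    (hnil : Nilcentralized F Q) (hfc : FullyCentralized F Q) : CentralizerTrivial F Q := by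
  have h : ∀ r ∈ Q, 1 * r * 1⁻¹ ∈ (⊤ : Subgroup P) := fun r _ => mem_top _
  have himg := imgIn_conjHom_one_self h
  simpa only [himg] using hnil _ (F.conj_mem ⊤ Q 1 h) (by rwa [himg])

/-- The restriction of `c` to `C_P(Q)` extends, by `c` itself, to a morphism fixing `Q`, so it is
conjugation by some `c₀ ∈ C_P(Q)`; as `c₀` also fixes `Q`, it induces `c` on all of `Q·C_P(Q)`. -/
theorem CentralizerTrivial.exists_conj_of_fixes {F : FrobeniusCategory P} {Q : Subgroup P}
    (hCT : CentralizerTrivial F Q)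
    {c : ↥(Q ⊔ centralizer (Q : Set P)) →* ↥(Q ⊔ centralizer (Q : Set P))}
    (hc : c ∈ F.Hom (Q ⊔ centralizer (Q : Set P)) (Q ⊔ centralizer (Q : Set P)))
    (hfix : ∀ x : ↥(Q ⊔ centralizer (Q : Set P)), (x : P) ∈ Q → c x = x) :
    ∃ c₀ ∈ centralizer (Q : Set P),
      ∀ x : ↥(Q ⊔ centralizer (Q : Set P)), (c x : P) = c₀ * x * c₀⁻¹ := by
  have hCN : centralizer (Q : Set P) ≤ Q ⊔ centralizer (Q : Set P) := le_sup_right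
  have hCC : ∀ z : ↥(centralizer (Q : Set P)),
      (c (inclusion hCN z) : P) ∈ centralizer (Q : Set P) :=
    fun z => apply_mem_centralizer_of_fixes le_sup_left c hfix _ z.2
  have hCQN : centralizer (Q : Set P) ⊔ Q ≤ Q ⊔ centralizer (Q : Set P) := (sup_comm _ _).le
  have hCQ : ∀ x : ↥(centralizer (Q : Set P) ⊔ Q),
      (c (inclusion hCQN x) : P) ∈ centralizer (Q : Set P) ⊔ Q :=
    fun x => (sup_comm Q (centralizer (Q : Set P))).le (c _).2
  obtain ⟨c₀, hc₀, hconj⟩ := hCT _ _ le_rfl le_rfl (restrict hCN hCN c hCC)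
    (F.restrict_mem hCN hCN hc hCC)
    ⟨restrict hCQN hCQN c hCQ, F.restrict_mem hCQN hCQN hc hCQ,
      fun _ => Subtype.ext (by simp only [restrict_apply_coe]; exact congrArg _ (congrArg c rfl)),
      fun x hx => by simp [hfix (inclusion hCQN x) hx]⟩
  have hext : (Q ⊔ centralizer (Q : Set P)).subtype.comp c =
      (MulAut.conj c₀).toMonoidHom.comp (Q ⊔ centralizer (Q : Set P)).subtype := by
    refine Subgroup.monoidHom_ext_sup (fun x hx => ?_) (fun x hx => ?_)
    · simp [hfix x hx, (mem_centralizer_iff.mp hc₀ x hx).symm]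
    · simpa [show inclusion hCN ⟨x, hx⟩ = x from rfl] using hconj ⟨x, hx⟩
  exact ⟨c₀, hc₀, fun x => DFunLike.congr_fun hext x⟩

end FS

open FS Subgroup in
theorem statement13_general {p : ℕ} {P : Type*} [Group P]
    (hP : IsPGroup p P) (F : FS.FrobeniusCategory P)
    (Q : Subgroup P) (hnil : FS.Nilcentralized F Q) (hfc : FS.FullyCentralized F Q) :
    ∀ c : ↥(Q ⊔ centralizer (Q : Set P)) →* ↥(Q ⊔ centralizer (Q : Set P)),
      c ∈ F.Hom (Q ⊔ centralizer (Q : Set P)) (Q ⊔ centralizer (Q : Set P)) →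
      Function.Surjective c →
      (∀ x : ↥(Q ⊔ centralizer (Q : Set P)), (x : P) ∈ Q → ((c x : ↥(Q ⊔ centralizer (Q : Set P))) : P) ∈ Q) →
      (∀ x : ↥(Q ⊔ centralizer (Q : Set P)), (x : P) ∈ Q → c x = x) →
      ∃ n : ℕ, ∀ x, (⇑c)^[p ^ n] x = x := by
  intro c hc _ _ hfix
  obtain ⟨c₀, -, hconj⟩ := (hnil.centralizerTrivial hfc).exists_conj_of_fixes hc hfix
  obtain ⟨k, hk⟩ := hP c₀
  exact ⟨k, fun x => Subtype.ext (by simp [iterate_apply_coe_eq_conj_pow hconj, hk])⟩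

open FS Subgroup in
/-- for a nilcentralized, fully centralized subgroup Q, the kernel
of the restriction homomorphism from the stabilizer of Q in Aut_F(Q·C_P(Q)) to
Aut_F(Q) is a p-group: every F-automorphism of Q·C_P(Q) stabilizing Q and
restricting to the identity on Q has p-power order. -/
theorem statement13 {p : ℕ} [Fact p.Prime] {P : Type*} [Group P] [Fintype P]
    (hP : IsPGroup p P) (F : FS.FrobeniusCategory P) (hsat : FS.IsSaturated p F)
    (Q : Subgroup P) (hnil : FS.Nilcentralized F Q) (hfc : FS.FullyCentralized F Q) :
    ∀ c : ↥(Q ⊔ centralizer (Q : Set P)) →* ↥(Q ⊔ centralizer (Q : Set P)),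
      c ∈ F.Hom (Q ⊔ centralizer (Q : Set P)) (Q ⊔ centralizer (Q : Set P)) →
      Function.Surjective c →
      (∀ x : ↥(Q ⊔ centralizer (Q : Set P)), (x : P) ∈ Q → ((c x : ↥(Q ⊔ centralizer (Q : Set P))) : P) ∈ Q) →
      (∀ x : ↥(Q ⊔ centralizer (Q : Set P)), (x : P) ∈ Q → c x = x) →
      ∃ n : ℕ, ∀ x, (⇑c)^[p ^ n] x = x :=
  statement13_general hP F Q hnil hfc
end

section
/- Uniqueness via length induction (Lemma 3.5, abstract form): let Z be an abelian group, 𝔇 a regular central Z-extension of a category 𝔆 whose objects include a terminal-like object P such that every 𝔆-morphism factors through chosen inclusion morphisms ι_Q : Q → P, and let F : 𝔇 → 𝔇 be a functor lifting the identity of 𝔆, commuting with the Z-action, fixing a chosen lift ι̂_Q of ι_Q for each object Q, and acting as the identity on every automorphism group Aut_𝔇(Q). If in addition every morphism of 𝔆 from Q to P can be written as a finite alternating composition of (restrictions of) the ι's and automorphisms (a 'length' decomposition), and morphisms ι̂_R ∘ f = ι̂_R ∘ g imply f = g (monomorphism property), then F is the identity functor. -/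
/-!
Call a morphism `φ` of `𝔆` fixed when `F` fixes every lift of `φ` to `𝔇`. Since `F` commutes
with the regular `Z`-action, one fixed lift suffices, so fixed morphisms are closed under
composition; they contain the inclusions `ι_Q` and all automorphisms, and `φ` is fixed as soon
as `φ ≫ ι_R` is, because `ι̂_R` is a monomorphism fixed by `F`. Induction on the length then
shows that every `φ : Q → P` is fixed, and composing an arbitrary `f : A → B` with `ι̂_B`
finishes the proof.
-/

universe u v

structure RawCat (Obj : Type u) where
  Hom : Obj → Obj → Type v
  id : ∀ A : Obj, Hom A A
  comp : ∀ {A B C : Obj}, Hom A B → Hom B C → Hom A C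
  id_comp : ∀ {A B : Obj} (f : Hom A B), comp (id A) f = f
  comp_id : ∀ {A B : Obj} (f : Hom A B), comp f (id B) = f
  assoc : ∀ {A B C D : Obj} (f : Hom A B) (g : Hom B C) (h : Hom C D),
    comp (comp f g) h = comp f (comp g h)

/-- A regular central `Z`-extension of a category `C`: a category `D` with the same
objects, a full functor `π : D → C` which is the identity on objects, and a free and
transitive (regular) action of `Z` on each fiber of `D.Hom A B → C.Hom A B`,
compatible with composition on both sides. -/
structure RegExt (Z : Type*) [CommGroup Z] {Obj : Type u} (C D : RawCat Obj) where
  π : ∀ {A B : Obj}, D.Hom A B → C.Hom A B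
  π_id : ∀ A : Obj, π (D.id A) = C.id A
  π_comp : ∀ {A B E : Obj} (f : D.Hom A B) (g : D.Hom B E),
    π (D.comp f g) = C.comp (π f) (π g)
  full : ∀ {A B : Obj} (f : C.Hom A B), ∃ g : D.Hom A B, π g = f
  smul : ∀ {A B : Obj}, Z → D.Hom A B → D.Hom A B
  π_smul : ∀ {A B : Obj} (z : Z) (f : D.Hom A B), π (smul z f) = π f
  one_smul : ∀ {A B : Obj} (f : D.Hom A B), smul 1 f = f
  mul_smul : ∀ {A B : Obj} (z w : Z) (f : D.Hom A B), smul (z * w) f = smul z (smul w f)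
  free : ∀ {A B : Obj} (z : Z) (f : D.Hom A B), smul z f = f → z = 1
  transitive : ∀ {A B : Obj} (f g : D.Hom A B), π f = π g → ∃ z : Z, smul z f = g
  smul_comp : ∀ {A B E : Obj} (z : Z) (f : D.Hom A B) (g : D.Hom B E),
    D.comp (smul z f) g = smul z (D.comp f g)
  comp_smul : ∀ {A B E : Obj} (z : Z) (f : D.Hom A B) (g : D.Hom B E),
    D.comp f (smul z g) = smul z (D.comp f g)

namespace RawCat

variable {Obj : Type u} (C : RawCat Obj)

def IsIso {A B : Obj} (f : C.Hom A B) : Prop :=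
  ∃ g : C.Hom B A, C.comp f g = C.id A ∧ C.comp g f = C.id B

end RawCat

namespace RegExt

variable {Z : Type*} [CommGroup Z] {Obj : Type u} {C D : RawCat Obj}
  (E : RegExt Z C D)

theorem smul_left_cancel {A B : Obj} {w w' : Z} {f : D.Hom A B}
    (h : E.smul w f = E.smul w' f) : w = w' :=
  (inv_mul_eq_one.mp <| E.free _ f <| by
    rw [E.mul_smul, h, ← E.mul_smul, inv_mul_cancel, E.one_smul]).symm

theorem inv_smul_smul {A B : Obj} (z : Z) (f : D.Hom A B) : E.smul z⁻¹ (E.smul z f) = f := by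
  rw [← E.mul_smul, inv_mul_cancel, E.one_smul]

theorem isIso_of_isIso_π {A B : Obj} {t : D.Hom A B} (h : C.IsIso (E.π t)) : D.IsIso t := by
  obtain ⟨τ', hright, hleft⟩ := h
  obtain ⟨t', rfl⟩ := E.full τ'
  obtain ⟨w, hw⟩ := E.transitive (D.id A) (D.comp t t') (by rw [E.π_comp, hright, E.π_id])
  obtain ⟨w', hw'⟩ := E.transitive (D.id B) (D.comp t' t) (by rw [E.π_comp, hleft, E.π_id])
  have hww' : w = w' := E.smul_left_cancel (f := t) <| calc
    E.smul w t = D.comp (E.smul w (D.id A)) t := by rw [E.smul_comp, D.id_comp]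
    _ = D.comp t (D.comp t' t) := by rw [hw, D.assoc]
    _ = E.smul w' t := by rw [← hw', E.comp_smul, D.comp_id]
  refine ⟨E.smul w⁻¹ t', ?_, ?_⟩
  · rw [E.comp_smul, ← hw, E.inv_smul_smul]
  · rw [E.smul_comp, ← hw', ← hww', E.inv_smul_smul]

def FixesFiber (F : ∀ {A B : Obj}, D.Hom A B → D.Hom A B) {A B : Obj} (φ : C.Hom A B) :
    Prop :=
  ∀ f : D.Hom A B, E.π f = φ → F f = f

variable (F : ∀ {A B : Obj}, D.Hom A B → D.Hom A B)

theorem fixesFiber_π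
    (hF_smul : ∀ {A B : Obj} (z : Z) (f : D.Hom A B), F (E.smul z f) = E.smul z (F f))
    {A B : Obj} {f : D.Hom A B} (hf : F f = f) : E.FixesFiber F (E.π f) := by
  intro g hg
  obtain ⟨z, rfl⟩ := E.transitive f g hg.symm
  exact (hF_smul z f).trans (by rw [hf])

theorem fixesFiber_comp
    (hF_smul : ∀ {A B : Obj} (z : Z) (f : D.Hom A B), F (E.smul z f) = E.smul z (F f))
    (hF_comp : ∀ {A B X : Obj} (f : D.Hom A B) (g : D.Hom B X),
      F (D.comp f g) = D.comp (F f) (F g))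
    {A B X : Obj} {φ : C.Hom A B} {ψ : C.Hom B X}
    (hφ : E.FixesFiber F φ) (hψ : E.FixesFiber F ψ) : E.FixesFiber F (C.comp φ ψ) := by
  obtain ⟨f, rfl⟩ := E.full φ
  obtain ⟨g, rfl⟩ := E.full ψ
  rw [← E.π_comp]
  exact E.fixesFiber_π F hF_smul
    (by rw [hF_comp, show F f = f from hφ f rfl, show F g = g from hψ g rfl])

theorem fixesFiber_of_isIso
    (hF_smul : ∀ {A B : Obj} (z : Z) (f : D.Hom A B), F (E.smul z f) = E.smul z (F f))
    (hF_iso : ∀ (A : Obj) (f : D.Hom A A), D.IsIso f → F f = f)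
    {A : Obj} {φ : C.Hom A A} (hφ : C.IsIso φ) : E.FixesFiber F φ := by
  obtain ⟨t, rfl⟩ := E.full φ
  exact E.fixesFiber_π F hF_smul (hF_iso A t (E.isIso_of_isIso_π hφ))

theorem fixesFiber_of_fixesFiber_comp
    (hF_comp : ∀ {A B X : Obj} (f : D.Hom A B) (g : D.Hom B X),
      F (D.comp f g) = D.comp (F f) (F g))
    {A B X : Obj} {m : D.Hom B X} (hm : F m = m)
    (hm_mono : ∀ f g : D.Hom A B, D.comp f m = D.comp g m → f = g)
    {φ : C.Hom A B} (h : E.FixesFiber F (C.comp φ (E.π m))) : E.FixesFiber F φ := by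
  intro f hf
  apply hm_mono
  calc D.comp (F f) m = F (D.comp f m) := by rw [hF_comp, hm]
    _ = D.comp f m := h _ (by rw [E.π_comp, hf])

end RegExt

theorem statement14_general {Z : Type*} [CommGroup Z] {Obj : Type u} (C D : RawCat Obj)
    (E : RegExt Z C D) (Pt : Obj)
    (iota : ∀ Q : Obj, C.Hom Q Pt) (iotaHat : ∀ Q : Obj, D.Hom Q Pt)
    (hiota : ∀ Q : Obj, E.π (iotaHat Q) = iota Q)
    (FH : ∀ {A B : Obj}, D.Hom A B → D.Hom A B)
    (hFcomp : ∀ {A B X : Obj} (f : D.Hom A B) (g : D.Hom B X),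
      FH (D.comp f g) = D.comp (FH f) (FH g))
    (hFZ : ∀ {A B : Obj} (z : Z) (f : D.Hom A B), FH (E.smul z f) = E.smul z (FH f))
    (hFiota : ∀ Q : Obj, FH (iotaHat Q) = iotaHat Q)
    (hFaut : ∀ (Q : Obj) (f : D.Hom Q Q),
      (∃ g, D.comp f g = D.id Q ∧ D.comp g f = D.id Q) → FH f = f)
    (len : ∀ Q : Obj, C.Hom Q Pt → ℕ)
    (hlen0 : ∀ (Q : Obj) (φ : C.Hom Q Pt), len Q φ = 0 →
      ∃ σ : C.Hom Pt Pt, (∃ τ, C.comp σ τ = C.id Pt ∧ C.comp τ σ = C.id Pt) ∧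
        φ = C.comp (iota Q) σ)
    (hlenS : ∀ (Q : Obj) (φ : C.Hom Q Pt), len Q φ ≠ 0 →
      ∃ (R : Obj) (η : C.Hom Q R) (τ : C.Hom R R),
        (∃ τ', C.comp τ τ' = C.id R ∧ C.comp τ' τ = C.id R) ∧
        φ = C.comp η (C.comp τ (iota R)) ∧ len Q (C.comp η (iota R)) < len Q φ)
    (hmono : ∀ {Q R : Obj} (f g : D.Hom Q R),
      D.comp f (iotaHat R) = D.comp g (iotaHat R) → f = g) :
    ∀ {A B : Obj} (f : D.Hom A B), FH f = f := by
  have fixes_iota (Q : Obj) : E.FixesFiber FH (iota Q) := by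
    rw [← hiota]; exact E.fixesFiber_π FH hFZ (hFiota Q)
  have cancel_iota {Q R : Obj} {φ : C.Hom Q R} (h : E.FixesFiber FH (C.comp φ (iota R))) :
      E.FixesFiber FH φ :=
    E.fixesFiber_of_fixesFiber_comp FH hFcomp (hFiota R) hmono (by rwa [hiota])
  have fixes_to_Pt : ∀ n (Q : Obj) (φ : C.Hom Q Pt), len Q φ = n → E.FixesFiber FH φ := by
    intro n
    induction n using Nat.strong_induction_on with
    | _ n ih =>
      intro Q φ hn
      by_cases h0 : len Q φ = 0
      · obtain ⟨σ, hσ, rfl⟩ := hlen0 Q φ h0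
        exact E.fixesFiber_comp FH hFZ hFcomp (fixes_iota Q)
          (E.fixesFiber_of_isIso FH hFZ hFaut hσ)
      · obtain ⟨R, η, τ, hτ, rfl, hlt⟩ := hlenS Q φ h0
        have hη : E.FixesFiber FH η := cancel_iota (ih _ (by omega) Q _ rfl)
        exact E.fixesFiber_comp FH hFZ hFcomp hη
          (E.fixesFiber_comp FH hFZ hFcomp (E.fixesFiber_of_isIso FH hFZ hFaut hτ) (fixes_iota R))
  intro A B f
  exact cancel_iota (fixes_to_Pt _ A _ rfl) f rfl

/-- abstract form of Lemma 3.5: a Z-functor of a regular central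
Z-extension lifting the identity, fixing the chosen lifted inclusions and acting as
the identity on all automorphism groups, is the identity, given the length
decomposition of morphisms to the distinguished object and the monomorphism
property of the lifted inclusions. -/
theorem statement14 {Z : Type*} [CommGroup Z] {Obj : Type u} (C D : RawCat Obj)
    (E : RegExt Z C D) (Pt : Obj)
    (iota : ∀ Q : Obj, C.Hom Q Pt) (iotaHat : ∀ Q : Obj, D.Hom Q Pt)
    (hiota : ∀ Q : Obj, E.π (iotaHat Q) = iota Q)
    (FH : ∀ {A B : Obj}, D.Hom A B → D.Hom A B)
    (hFid : ∀ A : Obj, FH (D.id A) = D.id A)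
    (hFcomp : ∀ {A B X : Obj} (f : D.Hom A B) (g : D.Hom B X),
      FH (D.comp f g) = D.comp (FH f) (FH g))
    (hFlift : ∀ {A B : Obj} (f : D.Hom A B), E.π (FH f) = E.π f)
    (hFZ : ∀ {A B : Obj} (z : Z) (f : D.Hom A B), FH (E.smul z f) = E.smul z (FH f))
    (hFiota : ∀ Q : Obj, FH (iotaHat Q) = iotaHat Q)
    (hFaut : ∀ (Q : Obj) (f : D.Hom Q Q),
      (∃ g, D.comp f g = D.id Q ∧ D.comp g f = D.id Q) → FH f = f)
    (len : ∀ Q : Obj, C.Hom Q Pt → ℕ)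
    (hlen0 : ∀ (Q : Obj) (φ : C.Hom Q Pt), len Q φ = 0 →
      ∃ σ : C.Hom Pt Pt, (∃ τ, C.comp σ τ = C.id Pt ∧ C.comp τ σ = C.id Pt) ∧
        φ = C.comp (iota Q) σ)
    (hlenS : ∀ (Q : Obj) (φ : C.Hom Q Pt), len Q φ ≠ 0 →
      ∃ (R : Obj) (η : C.Hom Q R) (τ : C.Hom R R),
        (∃ τ', C.comp τ τ' = C.id R ∧ C.comp τ' τ = C.id R) ∧
        φ = C.comp η (C.comp τ (iota R)) ∧ len Q (C.comp η (iota R)) < len Q φ)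
    (hmono : ∀ {Q R : Obj} (f g : D.Hom Q R),
      D.comp f (iotaHat R) = D.comp g (iotaHat R) → f = g) :
    ∀ {A B : Obj} (f : D.Hom A B), FH f = f :=
  statement14_general C D E Pt iota iotaHat hiota FH hFcomp hFZ hFiota hFaut len hlen0 hlenS hmono
end
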